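/- arXiv:1109.2481 — 5 statements merged into one kernel-verified Lean document; each statement's English description precedes it below -/
import Mathlib

section
/- Let n ≥ 1 and let V, X : ℝ → Matrix (Fin n) (Fin n) ℝ with V differentiable and X continuous, satisfying V'(t) = X(t)·V(t) + V(t)·X(t) and trace (X t) = 0 for all t ∈ ℝ. Then det (V t) = det (V 0) for all t ∈ ℝ. -/
open Matrix

attribute [local instance] Matrix.normedAddCommGroup Matrix.normedSpace

/-!
By Jacobi's formula `(det V)' = tr (adj V * V')`. For `V' = X V + V X`, cyclicity of the trace
and `adj V * V = V * adj V = det V • 1` turn this into `2 det V * tr X`, which vanishes.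
-/

namespace Matrix

variable {ι R : Type*} [Fintype ι] [DecidableEq ι]

def detRowContinuousMultilinear [CommRing R] [TopologicalSpace R] [IsTopologicalRing R] :
    ContinuousMultilinearMap R (fun _ : ι => ι → R) R where
  toMultilinearMap := (detRowAlternating : (ι → R) [⋀^ι]→ₗ[R] R).toMultilinearMap
  cont := continuous_id.matrix_det

theorem sum_det_updateRow_eq_trace_adjugate_mul [CommRing R] (A M : Matrix ι ι R) :
    ∑ i, (A.updateRow i (M i)).det = (adjugate A * M).trace := by
  simp_rw [← cramer_transpose_apply, cramer_eq_adjugate_mulVec, ← adjugate_transpose,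
    mulVec, dotProduct, transpose_apply, trace, diag, mul_apply]
  exact Finset.sum_comm

theorem trace_adjugate_mul_anticommutator [CommRing R] (A X : Matrix ι ι R) :
    (adjugate A * (X * A + A * X)).trace = 2 * A.det * X.trace := by
  rw [Matrix.mul_add, ← Matrix.mul_assoc, ← Matrix.mul_assoc, trace_add, adjugate_mul,
    trace_mul_cycle, mul_adjugate]
  simp only [Algebra.smul_mul_assoc, one_mul, trace_smul, smul_eq_mul]
  ring

theorem hasDerivAt_det {𝕜 : Type*} [NontriviallyNormedField 𝕜] {V : 𝕜 → Matrix ι ι 𝕜}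
    {V' : Matrix ι ι 𝕜} {t : 𝕜} (hV : HasDerivAt V V' t) :
    HasDerivAt (fun s => (V s).det) (adjugate (V t) * V').trace t := by
  rw [← sum_det_updateRow_eq_trace_adjugate_mul]
  exact ((detRowContinuousMultilinear.hasFDerivAt (V t)).comp_hasDerivAt t hV).congr_deriv
    (ContinuousMultilinearMap.linearDeriv_apply _ _ _)

end Matrix

theorem det_const_of_sandwich_ode_traceless_general (n : ℕ)
    (V X : ℝ → Matrix (Fin n) (Fin n) ℝ)
    (hV : ∀ t : ℝ, HasDerivAt V (X t * V t + V t * X t) t)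
    (htr : ∀ t : ℝ, (X t).trace = 0) :
    ∀ t : ℝ, (V t).det = (V 0).det := by
  have hdet : ∀ t, HasDerivAt (fun s => (V s).det) 0 t := fun t => by
    simpa [trace_adjugate_mul_anticommutator, htr t] using hasDerivAt_det (hV t)
  exact fun t => is_const_of_deriv_eq_zero (fun s => (hdet s).differentiableAt)
    (fun s => (hdet s).deriv) t 0

/-- If `V` is a differentiable matrix-valued path solving `V' = X·V + V·X` with `X` continuous
and traceless, then `det (V t)` is constant. -/
theorem det_const_of_sandwich_ode_traceless (n : ℕ) (hn : 1 ≤ n)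
    (V X : ℝ → Matrix (Fin n) (Fin n) ℝ)
    (hX : Continuous X)
    (hV : ∀ t : ℝ, HasDerivAt V (X t * V t + V t * X t) t)
    (htr : ∀ t : ℝ, (X t).trace = 0) :
    ∀ t : ℝ, (V t).det = (V 0).det :=
  det_const_of_sandwich_ode_traceless_general n V X hV htr
end

section
/- Let n ≥ 1 and T > 0. Let R : ℝ → Matrix (Fin n) (Fin n) ℝ be continuous with R(t) symmetric for every t. Let J : ℝ → Matrix (Fin n) (Fin n) ℝ be twice continuously differentiable with J''(t) + R(t)·J(t) = 0 for all t, J(0) = 0 and J'(0) = 1 (the identity matrix), and assume J(t) is invertible for all t ∈ (0, T]. Define E : (0, T] → Matrix (Fin n) (Fin n) ℝ by E(t) = J(t) · ∫_t^T J(s)⁻¹·(J(s)⁻¹)ᵀ ds. Then E is twice continuously differentiable on (0, T), satisfies E''(t) + R(t)·E(t) = 0 for all t ∈ (0, T), and E(T) = 0. -/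
/-!
With `K = J⁻¹` and `F u = ∫ s in u..T, K s * (K s)ᵀ`, the tensor is `E = J * F`, and
`J * F' = -J * K * Kᵀ = -Kᵀ`, so `E' = J' * F - Kᵀ`. Differentiating once more,
`(Kᵀ)' = -(K * J' * K)ᵀ`. The Wronskian `Jᵀ * J' - J'ᵀ * J` of the Jacobi equation is constant
(because `R` is symmetric) and vanishes at `0`, so `J' * K` is symmetric; hence
`(K * J' * K)ᵀ = J' * K * Kᵀ` cancels `J' * F'`, leaving `E'' = J'' * F = -R * E`.
-/

open Matrix Set intervalIntegral

attribute [local instance] Matrix.normedAddCommGroup Matrix.normedSpace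

section MatrixCalculus

variable {𝕜 : Type*} [NontriviallyNormedField 𝕜] {m : Type*} [Fintype m]
  {A B : 𝕜 → Matrix m m 𝕜} {A' B' : Matrix m m 𝕜} {t : 𝕜}

theorem HasDerivAt.matrix_mul [CompleteSpace 𝕜] (hA : HasDerivAt A A' t)
    (hB : HasDerivAt B B' t) :
    HasDerivAt (fun u => A u * B u) (A' * B t + A t * B') t :=
  ((LinearMap.mul 𝕜 (Matrix m m 𝕜)).toContinuousBilinearMap.hasDerivAt_of_bilinear
    (fun _ => hA) (fun _ => hB)).congr_deriv (add_comm _ _)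

theorem HasDerivAt.matrix_transpose [CompleteSpace 𝕜] (hA : HasDerivAt A A' t) :
    HasDerivAt (fun u => (A u)ᵀ) A'ᵀ t :=
  (LinearMap.toContinuousLinearMap (transposeLinearEquiv m m 𝕜 𝕜).toLinearMap).hasFDerivAt
    |>.comp_hasDerivAt t hA

variable [DecidableEq m]

theorem ContinuousAt.matrix_inv (hA : ContinuousAt A t) (ht : IsUnit (A t)) :
    ContinuousAt (fun u => (A u)⁻¹) t :=
  (continuousAt_matrix_inv _
    (NormedRing.inverse_continuousAt ((isUnit_iff_isUnit_det _).mp ht).unit)).comp hA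

theorem HasDerivAt.matrix_inv (hA : HasDerivAt A A' t) (ht : IsUnit (A t)) :
    HasDerivAt (fun u => (A u)⁻¹) (-((A t)⁻¹ * A' * (A t)⁻¹)) t := by
  have hunit : ∀ᶠ u in nhds t, IsUnit (A u) := by
    simp only [isUnit_iff_isUnit_det (A _), isUnit_iff_ne_zero] at ht ⊢
    exact (continuous_id.matrix_det.continuousAt.comp hA.continuousAt).eventually_ne ht
  refine hasDerivAt_iff_tendsto_slope.mpr ?_
  have hlim := ((hA.continuousAt.matrix_inv ht).tendsto.mono_left nhdsWithin_le_nhds).mul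
    (hasDerivAt_iff_tendsto_slope.mp hA) |>.mul_const (A t)⁻¹ |>.neg
  refine hlim.congr' ?_
  filter_upwards [hunit.filter_mono nhdsWithin_le_nhds] with u hu
  -- `A u⁻¹ - A t⁻¹ = A u⁻¹ (A t - A u) A t⁻¹`
  rw [slope_def_module, slope_def_module, Matrix.mul_smul, Matrix.smul_mul, ← smul_neg,
    mul_sub, sub_mul, nonsing_inv_mul _ ((isUnit_iff_isUnit_det _).mp hu), mul_assoc _ (A t),
    mul_nonsing_inv _ ((isUnit_iff_isUnit_det _).mp ht), one_mul, mul_one, neg_sub]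

end MatrixCalculus

theorem Matrix.isSymm_mul_inv_of_transpose_mul_eq {m α : Type*} [Fintype m] [DecidableEq m]
    [CommRing α] {A B : Matrix m m α} (hA : IsUnit A) (h : Aᵀ * B = Bᵀ * A) :
    (B * A⁻¹).IsSymm := by
  have hA' : IsUnit A.det := (isUnit_iff_isUnit_det A).mp hA
  calc (B * A⁻¹)ᵀ = (A⁻¹)ᵀ * (Bᵀ * A) * A⁻¹ := by
        rw [mul_assoc, mul_assoc, mul_nonsing_inv _ hA', mul_one, transpose_mul]
    _ = (A⁻¹)ᵀ * (Aᵀ * B) * A⁻¹ := by rw [h]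
    _ = B * A⁻¹ := by
        rw [← mul_assoc, ← transpose_mul, mul_nonsing_inv _ hA', transpose_one, one_mul]

theorem hasDerivAt_integral_left_of_continuousOn {E : Type*} [NormedAddCommGroup E]
    [NormedSpace ℝ E] [CompleteSpace E] {g : ℝ → E} {a b t : ℝ} (hg : ContinuousOn g (Ioc a b))
    (ht : t ∈ Ioo a b) : HasDerivAt (fun u => ∫ s in u..b, g s) (-g t) t := by
  have hgt : ContinuousAt g t := hg.continuousAt (Ioc_mem_nhds ht.1 ht.2)
  refine integral_hasDerivAt_left ?_ ?_ hgt
  · refine (hg.mono ?_).intervalIntegrable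
    rw [uIcc_of_le ht.2.le]
    exact Icc_subset_Ioc_iff ht.2.le |>.mpr ⟨ht.1, le_rfl⟩
  · exact (hg.mono Ioo_subset_Ioc_self).stronglyMeasurableAtFilter isOpen_Ioo t ht

section Jacobi

variable {m : Type*} [Fintype m] {R J J' J'' : ℝ → Matrix m m ℝ}

theorem hasDerivAt_wronskian_of_jacobi {t : ℝ} (hJd : HasDerivAt J (J' t) t)
    (hJd2 : HasDerivAt J' (J'' t) t) (hJac : J'' t + R t * J t = 0) (hR : (R t).IsSymm) :
    HasDerivAt (fun u => (J u)ᵀ * J' u - (J' u)ᵀ * J u) 0 t := by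
  have hJ'' : J'' t = -(R t * J t) := eq_neg_of_add_eq_zero_left hJac
  refine (hJd.matrix_transpose.matrix_mul hJd2 |>.sub
    (hJd2.matrix_transpose.matrix_mul hJd)).congr_deriv ?_
  rw [hJ'', transpose_neg, transpose_mul, hR.eq]
  noncomm_ring

theorem transpose_mul_deriv_comm_of_jacobi (hJd : ∀ t, HasDerivAt J (J' t) t)
    (hJd2 : ∀ t, HasDerivAt J' (J'' t) t) (hJac : ∀ t, J'' t + R t * J t = 0)
    (hR : ∀ t, (R t).IsSymm) (hJ0 : J 0 = 0) (t : ℝ) : (J t)ᵀ * J' t = (J' t)ᵀ * J t := by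
  have hW := fun u => hasDerivAt_wronskian_of_jacobi (hJd u) (hJd2 u) (hJac u) (hR u)
  have hconst := is_const_of_deriv_eq_zero (fun u => (hW u).differentiableAt)
    (fun u => (hW u).deriv) t 0
  simpa [hJ0, sub_eq_zero] using hconst

end Jacobi

section StableTensor

variable {m : Type*} [Fintype m] [DecidableEq m] {J J' J'' : ℝ → Matrix m m ℝ} {a b t : ℝ}

theorem hasDerivAt_integral_inv_mul_inv_transpose (hJ : Continuous J)
    (hinv : ∀ s ∈ Ioc a b, IsUnit (J s)) (ht : t ∈ Ioo a b) :
    HasDerivAt (fun u => ∫ s in u..b, (J s)⁻¹ * ((J s)⁻¹)ᵀ) (-((J t)⁻¹ * ((J t)⁻¹)ᵀ)) t := by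
  refine hasDerivAt_integral_left_of_continuousOn
    (fun s hs => ContinuousAt.continuousWithinAt ?_) ht
  have hK := hJ.continuousAt.matrix_inv (hinv s hs)
  exact hK.mul (continuous_id.matrix_transpose.continuousAt.comp hK)

theorem hasDerivAt_mul_integral_inv_mul_inv_transpose (hJd : ∀ s, HasDerivAt J (J' s) s)
    (hinv : ∀ s ∈ Ioc a b, IsUnit (J s)) (ht : t ∈ Ioo a b) :
    HasDerivAt (fun u => J u * ∫ s in u..b, (J s)⁻¹ * ((J s)⁻¹)ᵀ)
      (J' t * (∫ s in t..b, (J s)⁻¹ * ((J s)⁻¹)ᵀ) - ((J t)⁻¹)ᵀ) t := by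
  have hJ : Continuous J := continuous_iff_continuousAt.mpr fun s => (hJd s).continuousAt
  refine ((hJd t).matrix_mul (hasDerivAt_integral_inv_mul_inv_transpose hJ hinv ht)).congr_deriv ?_
  rw [mul_neg, ← mul_assoc, mul_nonsing_inv _ ((isUnit_iff_isUnit_det _).mp
    (hinv t (Ioo_subset_Ioc_self ht))), one_mul, sub_eq_add_neg]

theorem hasDerivAt_deriv_mul_integral_inv_mul_inv_transpose (hJd : ∀ s, HasDerivAt J (J' s) s)
    (hJd2 : ∀ s, HasDerivAt J' (J'' s) s) (hinv : ∀ s ∈ Ioc a b, IsUnit (J s))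
    (hsymm : (J' t * (J t)⁻¹).IsSymm) (ht : t ∈ Ioo a b) :
    HasDerivAt (fun u => J' u * (∫ s in u..b, (J s)⁻¹ * ((J s)⁻¹)ᵀ) - ((J u)⁻¹)ᵀ)
      (J'' t * ∫ s in t..b, (J s)⁻¹ * ((J s)⁻¹)ᵀ) t := by
  have hJ : Continuous J := continuous_iff_continuousAt.mpr fun s => (hJd s).continuousAt
  refine ((hJd2 t).matrix_mul (hasDerivAt_integral_inv_mul_inv_transpose hJ hinv ht)
    |>.sub ((hJd t).matrix_inv (hinv t (Ioo_subset_Ioc_self ht))).matrix_transpose).congr_deriv ?_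
  rw [transpose_neg, mul_assoc, transpose_mul, hsymm.eq]
  noncomm_ring

end StableTensor

theorem stable_jacobi_tensor_eq_general (n : ℕ) (T : ℝ)
    (R J J' J'' : ℝ → Matrix (Fin n) (Fin n) ℝ)
    (hRsymm : ∀ t : ℝ, (R t).IsSymm)
    (hJd : ∀ t : ℝ, HasDerivAt J (J' t) t)
    (hJd2 : ∀ t : ℝ, HasDerivAt J' (J'' t) t)
    (hJ''cont : Continuous J'')
    (hJac : ∀ t : ℝ, J'' t + R t * J t = 0)
    (hJ0 : J 0 = 0)
    (hinv : ∀ t ∈ Set.Ioc 0 T, IsUnit (J t)) :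
    ∃ E' E'' : ℝ → Matrix (Fin n) (Fin n) ℝ,
      (∀ t ∈ Set.Ioo 0 T,
        HasDerivAt (fun u => J u * ∫ s in u..T, (J s)⁻¹ * ((J s)⁻¹)ᵀ) (E' t) t) ∧
      (∀ t ∈ Set.Ioo 0 T, HasDerivAt E' (E'' t) t) ∧
      ContinuousOn E'' (Set.Ioo 0 T) ∧
      (∀ t ∈ Set.Ioo 0 T,
        E'' t + R t * (J t * ∫ s in t..T, (J s)⁻¹ * ((J s)⁻¹)ᵀ) = 0) ∧
      (J T * ∫ s in T..T, (J s)⁻¹ * ((J s)⁻¹)ᵀ) = 0 := by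
  have hJ : Continuous J := continuous_iff_continuousAt.mpr fun t => (hJd t).continuousAt
  have hsymm (t : ℝ) (ht : t ∈ Ioo 0 T) : (J' t * (J t)⁻¹).IsSymm :=
    isSymm_mul_inv_of_transpose_mul_eq (hinv t (Ioo_subset_Ioc_self ht))
      (transpose_mul_deriv_comm_of_jacobi hJd hJd2 hJac hRsymm hJ0 t)
  refine ⟨fun u => J' u * (∫ s in u..T, (J s)⁻¹ * ((J s)⁻¹)ᵀ) - ((J u)⁻¹)ᵀ,
    fun u => J'' u * ∫ s in u..T, (J s)⁻¹ * ((J s)⁻¹)ᵀ,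
    fun t ht => hasDerivAt_mul_integral_inv_mul_inv_transpose hJd hinv ht,
    fun t ht => hasDerivAt_deriv_mul_integral_inv_mul_inv_transpose hJd hJd2 hinv (hsymm t ht) ht,
    hJ''cont.continuousOn.mul fun t ht =>
      (hasDerivAt_integral_inv_mul_inv_transpose hJ hinv ht).continuousAt.continuousWithinAt,
    fun t _ => ?_, by rw [integral_same, mul_zero]⟩
  rw [← mul_assoc, ← add_mul, hJac, zero_mul]

/-- The tensor `E(t) = J(t)·∫_t^T J(s)⁻¹·(J(s)⁻¹)ᵀ ds` built from the matrix Jacobi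
tensor `J` is twice continuously differentiable on `(0,T)`, solves the Jacobi equation
`E'' + R·E = 0` there, and vanishes at `T`. -/
theorem stable_jacobi_tensor_eq (n : ℕ) (hn : 1 ≤ n) (T : ℝ) (hT : 0 < T)
    (R J J' J'' : ℝ → Matrix (Fin n) (Fin n) ℝ)
    (hRcont : Continuous R) (hRsymm : ∀ t : ℝ, (R t).IsSymm)
    (hJd : ∀ t : ℝ, HasDerivAt J (J' t) t)
    (hJd2 : ∀ t : ℝ, HasDerivAt J' (J'' t) t)
    (hJ''cont : Continuous J'')
    (hJac : ∀ t : ℝ, J'' t + R t * J t = 0)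
    (hJ0 : J 0 = 0) (hJ'0 : J' 0 = 1)
    (hinv : ∀ t ∈ Set.Ioc 0 T, IsUnit (J t)) :
    ∃ E' E'' : ℝ → Matrix (Fin n) (Fin n) ℝ,
      (∀ t ∈ Set.Ioo 0 T,
        HasDerivAt (fun u => J u * ∫ s in u..T, (J s)⁻¹ * ((J s)⁻¹)ᵀ) (E' t) t) ∧
      (∀ t ∈ Set.Ioo 0 T, HasDerivAt E' (E'' t) t) ∧
      ContinuousOn E'' (Set.Ioo 0 T) ∧
      (∀ t ∈ Set.Ioo 0 T,
        E'' t + R t * (J t * ∫ s in t..T, (J s)⁻¹ * ((J s)⁻¹)ᵀ) = 0) ∧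
      (J T * ∫ s in T..T, (J s)⁻¹ * ((J s)⁻¹)ᵀ) = 0 :=
  stable_jacobi_tensor_eq_general n T R J J' J'' hRsymm hJd hJd2 hJ''cont hJac hJ0 hinv
end

section
/- Let n ≥ 1 and T > 0. Let R : ℝ → Matrix (Fin n) (Fin n) ℝ be continuous with R(t) symmetric for every t. Let J : ℝ → Matrix (Fin n) (Fin n) ℝ be twice continuously differentiable with J''(t) + R(t)·J(t) = 0 for all t, J(0) = 0 and J'(0) = 1 (the identity matrix), and assume J(t) is invertible for all t ∈ (0, T]. Then lim_{t → 0⁺} J(t) · ∫_t^T J(s)⁻¹·(J(s)⁻¹)ᵀ ds = 1, the identity matrix. -/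
open Matrix Set Filter Topology

attribute [local instance] Matrix.normedAddCommGroup Matrix.normedSpace

/-!
Since `J 0 = 0` and `J' 0 = 1`, the difference quotient `s⁻¹ • J s` tends to `1`, hence so does
its inverse `s • (J s)⁻¹`, and the integrand is `s⁻² • 1 + o(s⁻²)` as `s → 0⁺`. Integrating from
`t` to `T` gives `t⁻¹ • 1 + o(t⁻¹)`, and multiplying by `J t = t • (1 + o(1))` yields `1`.
-/

theorem integral_inv_sq_of_pos {a b : ℝ} (ha : 0 < a) (hb : 0 < b) :
    ∫ s in a..b, (s ^ 2)⁻¹ = a⁻¹ - b⁻¹ := by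
  have h0 : (0 : ℝ) ∉ uIcc a b := fun h => (lt_min ha hb).not_ge (by simpa using h.1)
  have := integral_zpow (a := a) (b := b) (n := -2) (Or.inr ⟨by norm_num, h0⟩)
  simp only [_root_.zpow_neg, zpow_ofNat] at this
  rw [this]
  norm_num
  ring

theorem continuousOn_inv_sq : ContinuousOn (fun s : ℝ => (s ^ 2)⁻¹) (Ioi 0) :=
  (continuousOn_id.pow 2).inv₀ fun _ hs => pow_ne_zero 2 (ne_of_gt hs)

theorem ContinuousOn.intervalIntegrable_of_mem_Ioc {E : Type*} [NormedAddCommGroup E]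
    {F : ℝ → E} {T : ℝ} (hF : ContinuousOn F (Ioc 0 T)) {a b : ℝ}
    (ha : a ∈ Ioc 0 T) (hb : b ∈ Ioc 0 T) : IntervalIntegrable F MeasureTheory.volume a b :=
  (hF.mono (ordConnected_Ioc.uIcc_subset ha hb)).intervalIntegrable

theorem HasDerivAt.tendsto_inv_smul_nhdsGT_zero {E : Type*} [NormedAddCommGroup E]
    [NormedSpace ℝ E] {f : ℝ → E} {f' : E} (hf : HasDerivAt f f' 0) (hf0 : f 0 = 0) :
    Tendsto (fun t => t⁻¹ • f t) (𝓝[>] 0) (𝓝 f') :=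
  hf.tendsto_slope_zero_right.congr fun t => by rw [zero_add, hf0, sub_zero]

section IntervalIntegral

variable {E : Type*} [NormedAddCommGroup E] [NormedSpace ℝ E] {F : ℝ → E} {T : ℝ}

theorem norm_intervalIntegral_le_of_norm_le_inv_sq {C a b : ℝ} (ha : 0 < a) (hab : a ≤ b)
    (hC : 0 ≤ C) (hF : ∀ s ∈ Ioc a b, ‖F s‖ ≤ C * (s ^ 2)⁻¹) :
    ‖∫ s in a..b, F s‖ ≤ C * a⁻¹ := calc
  ‖∫ s in a..b, F s‖ ≤ ∫ s in a..b, C * (s ^ 2)⁻¹ := by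
    refine intervalIntegral.norm_integral_le_of_norm_le hab (MeasureTheory.ae_of_all _ hF) ?_
    exact (continuousOn_const.mul (continuousOn_inv_sq.mono fun s hs =>
      ha.trans_le (uIcc_of_le hab ▸ hs).1)).intervalIntegrable
  _ = C * (a⁻¹ - b⁻¹) := by
    rw [intervalIntegral.integral_const_mul, integral_inv_sq_of_pos ha (ha.trans_le hab)]
  _ ≤ C * a⁻¹ := by gcongr; linarith [inv_pos.2 (ha.trans_le hab)]

theorem tendsto_smul_intervalIntegral_zero_of_tendsto_sq_smul_zero (hT : 0 < T)
    (hF : ContinuousOn F (Ioc 0 T)) (hlim : Tendsto (fun s => s ^ 2 • F s) (𝓝[>] 0) (𝓝 0)) :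
    Tendsto (fun t => t • ∫ s in t..T, F s) (𝓝[>] 0) (𝓝 0) := by
  rw [Metric.tendsto_nhds]
  intro ε hε
  obtain ⟨b, hb0, hb⟩ := (nhdsGT_basis (0 : ℝ)).eventually_iff.1
    (hlim.eventually (Metric.ball_mem_nhds 0 (half_pos hε)))
  set η := min (b / 2) T
  have hη : η ∈ Ioc 0 T := ⟨lt_min (half_pos hb0) hT, min_le_right _ _⟩
  have hbound : ∀ s ∈ Ioc 0 η, ‖F s‖ ≤ ε / 2 * (s ^ 2)⁻¹ := by
    intro s hs
    have hs2 : 0 < s ^ 2 := pow_pos hs.1 2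
    have := mem_ball_zero_iff.1
      (hb ⟨hs.1, hs.2.trans_lt ((min_le_left _ _).trans_lt (half_lt_self hb0))⟩)
    rw [norm_smul, Real.norm_of_nonneg hs2.le] at this
    rw [← div_eq_mul_inv, le_div_iff₀ hs2]
    linarith
  -- Split `∫_t^T` at `η`: below `η` the integrand is at most `(ε/2) s⁻²`, while `∫_η^T` is a
  -- fixed vector, killed by the factor `t`.
  have hfar : Tendsto (fun t : ℝ => t • ∫ s in η..T, F s) (𝓝[>] 0) (𝓝 0) :=
    ((continuous_id.smul continuous_const).tendsto' (0 : ℝ) (0 : E) (by simp)).mono_left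
      nhdsWithin_le_nhds
  filter_upwards [Ioo_mem_nhdsGT hη.1, hfar.eventually (Metric.ball_mem_nhds 0 (half_pos hε))]
    with t ht hfar_t
  have hnear : ‖∫ s in t..η, F s‖ ≤ ε / 2 * t⁻¹ :=
    norm_intervalIntegral_le_of_norm_le_inv_sq ht.1 ht.2.le (half_pos hε).le
      fun s hs => hbound s ⟨ht.1.trans hs.1, hs.2⟩
  rw [dist_zero_right, ← intervalIntegral.integral_add_adjacent_intervals
    (hF.intervalIntegrable_of_mem_Ioc ⟨ht.1, ht.2.le.trans hη.2⟩ hη)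
    (hF.intervalIntegrable_of_mem_Ioc hη ⟨hT, le_rfl⟩), smul_add]
  calc ‖(t • ∫ s in t..η, F s) + t • ∫ s in η..T, F s‖
      ≤ t * ‖∫ s in t..η, F s‖ + ‖t • ∫ s in η..T, F s‖ := by
        refine (norm_add_le _ _).trans_eq ?_
        rw [norm_smul, Real.norm_of_nonneg ht.1.le]
    _ < t * (ε / 2 * t⁻¹) + ε / 2 :=
        add_lt_add_of_le_of_lt (mul_le_mul_of_nonneg_left hnear ht.1.le)
          (dist_zero_right (E := E) _ ▸ hfar_t)
    _ = ε := by rw [mul_left_comm, mul_inv_cancel₀ ht.1.ne', mul_one, add_halves]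

theorem tendsto_smul_intervalIntegral_of_tendsto_sq_smul [CompleteSpace E] {v : E} (hT : 0 < T)
    (hF : ContinuousOn F (Ioc 0 T)) (hlim : Tendsto (fun s => s ^ 2 • F s) (𝓝[>] 0) (𝓝 v)) :
    Tendsto (fun t => t • ∫ s in t..T, F s) (𝓝[>] 0) (𝓝 v) := by
  have hsq : ContinuousOn (fun s : ℝ => (s ^ 2)⁻¹ • v) (Ioc 0 T) :=
    (continuousOn_inv_sq.mono Ioc_subset_Ioi_self).smul continuousOn_const
  have hGcont : ContinuousOn (fun s => F s - (s ^ 2)⁻¹ • v) (Ioc 0 T) := hF.sub hsq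
  have hG : Tendsto (fun s => s ^ 2 • (F s - (s ^ 2)⁻¹ • v)) (𝓝[>] 0) (𝓝 0) := by
    refine (sub_self v ▸ hlim.sub_const v).congr' (eventually_nhdsWithin_of_forall fun s hs => ?_)
    beta_reduce
    rw [smul_sub, smul_smul, mul_inv_cancel₀ (pow_ne_zero 2 (ne_of_gt hs)), one_smul]
  have hmain : Tendsto (fun t : ℝ => (1 - t / T) • v) (𝓝[>] 0) (𝓝 v) :=
    (Continuous.tendsto' (by fun_prop) 0 v (by simp)).mono_left nhdsWithin_le_nhds
  refine (add_zero v ▸ hmain.add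
    (tendsto_smul_intervalIntegral_zero_of_tendsto_sq_smul_zero hT hGcont hG)).congr' ?_
  filter_upwards [Ioo_mem_nhdsGT hT] with t ht
  have htmem : t ∈ Ioc 0 T := ⟨ht.1, ht.2.le⟩
  have hT' : T ∈ Ioc 0 T := ⟨hT, le_rfl⟩
  rw [intervalIntegral.integral_sub (hF.intervalIntegrable_of_mem_Ioc htmem hT')
    (hsq.intervalIntegrable_of_mem_Ioc htmem hT'), intervalIntegral.integral_smul_const,
    integral_inv_sq_of_pos ht.1 hT, smul_sub, smul_smul, mul_sub, mul_inv_cancel₀ ht.1.ne',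
    ← div_eq_mul_inv]
  abel

end IntervalIntegral

section MatrixInverse

variable {m 𝕜 : Type*} [Fintype m] [DecidableEq m] [Field 𝕜]

theorem Matrix.smul_inv₀ (k : 𝕜) (A : Matrix m m 𝕜) : (k • A)⁻¹ = k⁻¹ • A⁻¹ := by
  rcases eq_or_ne k 0 with rfl | hk
  · simp
  by_cases hA : IsUnit A.det
  · exact Matrix.inv_smul' A (Units.mk0 k hk) hA
  · have hkA : ¬IsUnit (k • A).det := by
      rwa [det_smul, IsUnit.mul_iff, not_and_or, or_iff_right (by simp [hk])]
    rw [nonsing_inv_apply_not_isUnit _ hA, nonsing_inv_apply_not_isUnit _ hkA, smul_zero]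

theorem Matrix.continuousAt_inv_of_isUnit [TopologicalSpace 𝕜] [IsTopologicalDivisionRing 𝕜]
    {A : Matrix m m 𝕜} (hA : IsUnit A) : ContinuousAt Inv.inv A :=
  continuousAt_matrix_inv A <| Ring.inverse_eq_inv' (G₀ := 𝕜) ▸
    continuousAt_inv₀ ((isUnit_iff_isUnit_det A).1 hA).ne_zero

end MatrixInverse

theorem tendsto_sq_smul_inv_mul_inv_transpose {m : Type*} [Fintype m] [DecidableEq m]
    {J : ℝ → Matrix m m ℝ} (hJ0 : J 0 = 0) (hJ : HasDerivAt J 1 0) :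
    Tendsto (fun s => s ^ 2 • ((J s)⁻¹ * ((J s)⁻¹)ᵀ)) (𝓝[>] 0) (𝓝 1) := by
  have hinv : Tendsto (fun s => s • (J s)⁻¹) (𝓝[>] 0) (𝓝 1) := by
    simpa [Function.comp_def, Matrix.smul_inv₀] using
      (Matrix.continuousAt_inv_of_isUnit isUnit_one).tendsto.comp
        (hJ.tendsto_inv_smul_nhdsGT_zero hJ0)
  simpa [sq, mul_smul, transpose_smul, smul_mul_smul_comm] using
    hinv.mul ((continuous_id.matrix_transpose.tendsto 1).comp hinv)

theorem jacobi_tensor_limit_id_general (n : ℕ) (T : ℝ) (hT : 0 < T)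
    (J J' : ℝ → Matrix (Fin n) (Fin n) ℝ)
    (hJd : ∀ t : ℝ, HasDerivAt J (J' t) t)
    (hJ0 : J 0 = 0) (hJ'0 : J' 0 = 1)
    (hinv : ∀ t ∈ Set.Ioc 0 T, IsUnit (J t)) :
    Tendsto (fun t => J t * ∫ s in t..T, (J s)⁻¹ * ((J s)⁻¹)ᵀ)
      (𝓝[>] (0 : ℝ)) (𝓝 (1 : Matrix (Fin n) (Fin n) ℝ)) := by
  have hJ : HasDerivAt J 1 0 := hJ'0 ▸ hJd 0
  have hJinv : ContinuousOn (fun s => (J s)⁻¹) (Ioc 0 T) := fun s hs =>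
    ((Matrix.continuousAt_inv_of_isUnit (hinv s hs)).comp (hJd s).continuousAt).continuousWithinAt
  have hF : ContinuousOn (fun s => (J s)⁻¹ * ((J s)⁻¹)ᵀ) (Ioc 0 T) :=
    hJinv.mul (continuous_id.matrix_transpose.comp_continuousOn hJinv)
  have hint := tendsto_smul_intervalIntegral_of_tendsto_sq_smul hT hF
    (tendsto_sq_smul_inv_mul_inv_transpose hJ0 hJ)
  have hslope : Tendsto (fun t => t⁻¹ • J t) (𝓝[>] 0) (𝓝 1) :=
    hJ.tendsto_inv_smul_nhdsGT_zero hJ0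
  refine (mul_one (1 : Matrix (Fin n) (Fin n) ℝ) ▸ hslope.mul hint).congr'
    (eventually_nhdsWithin_of_forall fun t ht => ?_)
  rw [smul_mul_smul_comm, inv_mul_cancel₀ (ne_of_gt ht), one_smul]

/-- For the matrix Jacobi tensor `J` (with `J(0) = 0`, `J'(0) = 1` and `J(t)` invertible
on `(0,T]`), one has `J(t)·∫_t^T J(s)⁻¹·(J(s)⁻¹)ᵀ ds → 1` as `t → 0⁺`. -/
theorem jacobi_tensor_limit_id (n : ℕ) (hn : 1 ≤ n) (T : ℝ) (hT : 0 < T)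
    (R J J' J'' : ℝ → Matrix (Fin n) (Fin n) ℝ)
    (hRcont : Continuous R) (hRsymm : ∀ t : ℝ, (R t).IsSymm)
    (hJd : ∀ t : ℝ, HasDerivAt J (J' t) t)
    (hJd2 : ∀ t : ℝ, HasDerivAt J' (J'' t) t)
    (hJ''cont : Continuous J'')
    (hJac : ∀ t : ℝ, J'' t + R t * J t = 0)
    (hJ0 : J 0 = 0) (hJ'0 : J' 0 = 1)
    (hinv : ∀ t ∈ Set.Ioc 0 T, IsUnit (J t)) :
    Tendsto (fun t => J t * ∫ s in t..T, (J s)⁻¹ * ((J s)⁻¹)ᵀ)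
      (𝓝[>] (0 : ℝ)) (𝓝 (1 : Matrix (Fin n) (Fin n) ℝ)) :=
  jacobi_tensor_limit_id_general n T hT J J' hJd hJ0 hJ'0 hinv
end

section
/- Let n ≥ 1, let K be a compact topological space, and let A_k : K → Matrix (Fin n) (Fin n) ℝ (k ∈ ℕ) be a sequence of continuous maps such that for every x ∈ K and every k: A_k(x) is symmetric and A_{k+1}(x) − A_k(x) is positive semidefinite. Suppose A_k converges pointwise on K to a map A : K → Matrix (Fin n) (Fin n) ℝ with A(x) symmetric for all x, and suppose the function x ↦ trace (A x) is continuous on K. Then A_k converges to A uniformly on K, and in particular A is continuous. -/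
/-!
Dini's theorem applied to the traces: `k ↦ tr A_k` is a monotone sequence of continuous real
functions converging pointwise to the continuous `tr A`, hence uniformly. Since the positive
semidefinite cone is closed, `A - A_k` is positive semidefinite, and every entry of a positive
semidefinite matrix is bounded by its trace (`2 |M i j| ≤ M i i + M j j`), so
`‖A - A_k‖ ≤ tr A - tr A_k` uniformly on `K`.
-/

open Matrix Filter Topology

attribute [local instance] Matrix.normedAddCommGroup Matrix.normedSpace

theorem TendstoUniformly.of_dist_le {ι α β γ : Type*} [PseudoMetricSpace β] [PseudoMetricSpace γ]
    {p : Filter ι} {F : ι → α → β} {f : α → β} {G : ι → α → γ} {g : α → γ}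
    (hG : TendstoUniformly G g p) (h : ∀ i x, dist (f x) (F i x) ≤ dist (g x) (G i x)) :
    TendstoUniformly F f p :=
  Metric.tendstoUniformly_iff.2 fun ε hε =>
    (Metric.tendstoUniformly_iff.1 hG ε hε).mono fun i hi x => (h i x).trans_lt (hi x)

namespace Matrix

variable {n : Type*} [Fintype n]

theorem isClosed_setOf_posSemidef {R : Type*} [CommRing R] [PartialOrder R] [StarRing R]
    [TopologicalSpace R] [IsTopologicalRing R] [ContinuousStar R] [T2Space R]
    [ClosedIciTopology R] :
    IsClosed {M : Matrix n n R | M.PosSemidef} := by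
  simp_rw [posSemidef_iff_dotProduct_mulVec, Set.ofPred_and, Set.ofPred_forall]
  refine .inter (isClosed_eq (by fun_prop) continuous_id) (isClosed_iInter fun x => ?_)
  exact isClosed_Ici.preimage (by fun_prop)

section LoewnerOrder

open scoped ComplexOrder MatrixOrder

variable {𝕜 : Type*} [RCLike 𝕜]

theorem ge_of_tendsto {ι : Type*} {l : Filter ι} [l.NeBot] {u : ι → Matrix n n 𝕜}
    {a b : Matrix n n 𝕜} (hu : Tendsto u l (𝓝 a)) (hb : ∀ᶠ i in l, b ≤ u i) : b ≤ a :=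
  isClosed_setOf_posSemidef.mem_of_tendsto (hu.sub_const b) hb

theorem trace_mono : Monotone (trace : Matrix n n 𝕜 → 𝕜) := fun A B h => by
  simpa [trace_sub] using (le_iff.1 h).trace_nonneg

end LoewnerOrder

theorem PosSemidef.apply_le_trace {M : Matrix n n ℝ} (hM : M.PosSemidef) (i : n) :
    M i i ≤ M.trace :=
  Finset.single_le_sum (f := fun k => M k k) (fun _ _ => hM.diag_nonneg) (Finset.mem_univ i)

theorem PosSemidef.abs_apply_le_trace {M : Matrix n n ℝ} (hM : M.PosSemidef) (i j : n) :
    |M i j| ≤ M.trace := by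
  classical
  have hsymm : M j i = M i j := by simpa using hM.isHermitian.apply i j
  have hquad (s : ℝ) : 0 ≤ M i i + 2 * s * M i j + s ^ 2 * M j j := by
    have := hM.dotProduct_mulVec_nonneg (Pi.single i 1 + s • Pi.single j 1)
    rw [star_trivial, mulVec_add, mulVec_smul, mulVec_single_one, mulVec_single_one] at this
    simp only [dotProduct_add, add_dotProduct, smul_dotProduct, dotProduct_smul,
      single_dotProduct, one_mul, col_apply, smul_eq_mul] at this
    linear_combination this + s * hsymm
  have hii := hM.apply_le_trace i
  have hjj := hM.apply_le_trace j
  have h₁ := hquad 1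
  have h₂ := hquad (-1)
  rw [abs_le]
  constructor <;> linarith

theorem PosSemidef.norm_le_trace {M : Matrix n n ℝ} (hM : M.PosSemidef) : ‖M‖ ≤ M.trace :=
  (norm_le_iff hM.trace_nonneg).2 hM.abs_apply_le_trace

open scoped MatrixOrder in
theorem tendstoUniformly_of_monotone_of_continuous_trace {ι K : Type*} [Preorder ι]
    [IsDirectedOrder ι] [Nonempty ι] [TopologicalSpace K] [CompactSpace K]
    {F : ι → K → Matrix n n ℝ} {f : K → Matrix n n ℝ} (hF : ∀ i, Continuous (F i))
    (hmono : Monotone F) (hFf : ∀ x, Tendsto (F · x) atTop (𝓝 (f x)))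
    (htr : Continuous fun x => (f x).trace) :
    TendstoUniformly F f atTop := by
  have hFle (i : ι) (x : K) : F i x ≤ f x :=
    ge_of_tendsto (hFf x) ((eventually_ge_atTop i).mono fun j hij => hmono hij x)
  have htr_unif : TendstoUniformly (fun i x => (F i x).trace) (fun x => (f x).trace) atTop :=
    Monotone.tendstoUniformly_of_forall_tendsto (fun i => (hF i).matrix_trace)
      (fun i j hij x => trace_mono (hmono hij x)) htr
      fun x => (continuous_id.matrix_trace.tendsto _).comp (hFf x)
  refine htr_unif.of_dist_le fun i x => ?_
  rw [dist_eq_norm, Real.dist_eq, ← trace_sub]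
  exact (le_iff.1 (hFle i x)).norm_le_trace.trans (le_abs_self _)

end Matrix

open scoped MatrixOrder in
theorem dini_loewner_general (n : ℕ) (K : Type*) [TopologicalSpace K] [CompactSpace K]
    (A : ℕ → K → Matrix (Fin n) (Fin n) ℝ) (Alim : K → Matrix (Fin n) (Fin n) ℝ)
    (hAcont : ∀ k : ℕ, Continuous (A k))
    (hmono : ∀ (k : ℕ) (x : K), (A (k + 1) x - A k x).PosSemidef)
    (hptwise : ∀ x : K, Tendsto (fun k => A k x) atTop (𝓝 (Alim x)))
    (htrcont : Continuous (fun x => (Alim x).trace)) :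
    TendstoUniformly A Alim atTop ∧ Continuous Alim := by
  have hA : Monotone A := monotone_nat_of_le_succ fun k x => hmono k x
  have hunif := tendstoUniformly_of_monotone_of_continuous_trace hAcont hA hptwise htrcont
  exact ⟨hunif, hunif.continuous (.of_forall hAcont)⟩

/-- Dini-type theorem: a monotone (in the Loewner order) sequence of continuous
symmetric-matrix-valued maps on a compact space converging pointwise to a symmetric
limit with continuous trace converges uniformly; in particular the limit is continuous. -/
theorem dini_loewner (n : ℕ) (hn : 1 ≤ n) (K : Type*) [TopologicalSpace K] [CompactSpace K]
    (A : ℕ → K → Matrix (Fin n) (Fin n) ℝ) (Alim : K → Matrix (Fin n) (Fin n) ℝ)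
    (hAcont : ∀ k : ℕ, Continuous (A k))
    (hAsymm : ∀ (k : ℕ) (x : K), (A k x).IsSymm)
    (hmono : ∀ (k : ℕ) (x : K), (A (k + 1) x - A k x).PosSemidef)
    (hptwise : ∀ x : K, Tendsto (fun k => A k x) atTop (𝓝 (Alim x)))
    (hlimsymm : ∀ x : K, (Alim x).IsSymm)
    (htrcont : Continuous (fun x => (Alim x).trace)) :
    TendstoUniformly A Alim atTop ∧ Continuous Alim :=
  dini_loewner_general n K A Alim hAcont hmono hptwise htrcont
end

section
/- Let n ≥ 1, α > 0, β ≠ 0, and let A, B be real symmetric n×n matrices such that A is negative semidefinite, V := B − A is positive semidefinite, trace A = −α, trace B = α, and det V = β. Then β > 0, the operator norm of A satisfies ‖A‖ ≤ α, and ⟪V·x, x⟫ ≥ β·(2·α)^(1−n)·‖x‖² for all x ∈ ℝⁿ, where ⟪·,·⟫ and ‖·‖ are the Euclidean inner product and norm. -/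
/-!
Everything is read off the spectra. `-A` is positive semidefinite with trace `α`, so its
eigenvalues lie in `[0, α]`, and the operator norm of a Hermitian matrix is its largest absolute
eigenvalue. The eigenvalues `λᵢ` of `V = B - A` are nonnegative with sum `2α` and product `β`,
so `β > 0` and `β ≤ λᵢ (2α)^(n-1)` for every `i`; hence `V ≥ β (2α)^(1-n)` in the Loewner order.
-/

open Matrix Finset
open scoped Matrix.Norms.L2Operator MatrixOrder ComplexOrder

theorem Finset.prod_le_mul_sum_pow_card_sub_one {ι R : Type*} [Fintype ι] [DecidableEq ι]
    [CommSemiring R] [PartialOrder R] [IsOrderedRing R] {f : ι → R} (hf : ∀ j, 0 ≤ f j) (i : ι) :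
    ∏ j, f j ≤ f i * (∑ j, f j) ^ (Fintype.card ι - 1) := by
  rw [← mul_prod_erase univ f (mem_univ i), ← card_univ, ← card_erase_of_mem (mem_univ i),
    ← prod_const]
  exact mul_le_mul_of_nonneg_left
    (prod_le_prod (fun j _ => hf j) fun j _ => single_le_sum (fun k _ => hf k) (mem_univ j)) (hf i)

namespace Matrix

section RCLike

variable {n 𝕜 : Type*} [Fintype n] [DecidableEq n] [RCLike 𝕜] {A : Matrix n n 𝕜}

lemma IsHermitian.l2_opNorm_eq_norm_eigenvalues (hA : A.IsHermitian) :
    ‖A‖ = ‖hA.eigenvalues‖ := by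
  conv_lhs => rw [hA.spectral_theorem, Unitary.conjStarAlgAut_apply, ← Unitary.coe_star,
    CStarRing.norm_mul_coe_unitary, CStarRing.norm_coe_unitary_mul, l2_opNorm_diagonal]
  simp [Pi.norm_def]

lemma PosSemidef.l2_opNorm_le_trace (hA : A.PosSemidef) : ‖A‖ ≤ RCLike.re A.trace := by
  rw [hA.1.l2_opNorm_eq_norm_eigenvalues, hA.1.trace_eq_sum_eigenvalues, ← RCLike.ofReal_sum,
    RCLike.ofReal_re]
  refine (pi_norm_le_iff_of_nonneg (sum_nonneg fun i _ => hA.eigenvalues_nonneg i)).2 fun i => ?_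
  rw [Real.norm_of_nonneg (hA.eigenvalues_nonneg i)]
  exact single_le_sum (fun j _ => hA.eigenvalues_nonneg j) (mem_univ i)

lemma IsHermitian.algebraMap_le_iff_le_eigenvalues (hA : A.IsHermitian) {c : ℝ} :
    algebraMap ℝ _ c ≤ A ↔ ∀ i, c ≤ hA.eigenvalues i := by
  rw [algebraMap_le_iff_le_spectrum hA.isSelfAdjoint, hA.spectrum_real_eq_range_eigenvalues,
    Set.forall_mem_range]

lemma IsHermitian.mul_re_dotProduct_self_le_of_le_eigenvalues (hA : A.IsHermitian) {c : ℝ}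
    (hc : ∀ i, c ≤ hA.eigenvalues i) (x : n → 𝕜) :
    c * RCLike.re (star x ⬝ᵥ x) ≤ RCLike.re (star x ⬝ᵥ (A *ᵥ x)) := by
  simpa [sub_mulVec, dotProduct_sub, Algebra.algebraMap_eq_smul_one, smul_mulVec,
    dotProduct_smul, RCLike.smul_re] using
    (hA.algebraMap_le_iff_le_eigenvalues.2 hc).re_dotProduct_nonneg x

end RCLike

variable {n : Type*} [Fintype n] {A : Matrix n n ℝ}

lemma posSemidef_of_forall_mulVec_dotProduct_nonneg (hA : A.IsSymm)
    (h : ∀ x, 0 ≤ (A *ᵥ x) ⬝ᵥ x) : A.PosSemidef :=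
  .of_dotProduct_mulVec_nonneg (isHermitian_iff_isSymm.2 hA) fun x => by
    simpa [dotProduct_comm] using h x

lemma PosSemidef.det_le_eigenvalues_mul_trace_pow [DecidableEq n] (hA : A.PosSemidef) (i : n) :
    A.det ≤ hA.1.eigenvalues i * A.trace ^ (Fintype.card n - 1) := by
  simpa [hA.1.det_eq_prod_eigenvalues, hA.1.trace_eq_sum_eigenvalues] using
    prod_le_mul_sum_pow_card_sub_one hA.eigenvalues_nonneg i

end Matrix

theorem bolton_criterion_estimates_general (n : ℕ) (α β : ℝ)
    (hα : 0 < α) (hβ : β ≠ 0)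
    (A B : Matrix (Fin n) (Fin n) ℝ)
    (hAsymm : A.IsSymm) (hBsymm : B.IsSymm)
    (hAneg : ∀ x : Fin n → ℝ, (A *ᵥ x) ⬝ᵥ x ≤ 0)
    (hVpos : ∀ x : Fin n → ℝ, 0 ≤ ((B - A) *ᵥ x) ⬝ᵥ x)
    (htrA : A.trace = -α) (htrB : B.trace = α)
    (hdet : (B - A).det = β) :
    0 < β ∧ ‖Matrix.toEuclideanCLM (𝕜 := ℝ) A‖ ≤ α ∧
      ∀ x : Fin n → ℝ, β * (2 * α) ^ (1 - (n : ℤ)) * (x ⬝ᵥ x) ≤ ((B - A) *ᵥ x) ⬝ᵥ x := by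
  have hV : (B - A).PosSemidef :=
    posSemidef_of_forall_mulVec_dotProduct_nonneg (hBsymm.sub hAsymm) hVpos
  have hnegA : (-A).PosSemidef := posSemidef_of_forall_mulVec_dotProduct_nonneg hAsymm.neg
    fun x => by simpa [neg_mulVec] using hAneg x
  have htrV : (B - A).trace = 2 * α := by rw [trace_sub, htrA, htrB]; ring
  refine ⟨(hdet ▸ hV.det_nonneg).lt_of_ne' hβ, ?_, fun x => ?_⟩
  · simpa [l2_opNorm_toEuclideanCLM, htrA] using hnegA.l2_opNorm_le_trace
  · have hc : ∀ i, β * (2 * α) ^ (1 - (n : ℤ)) ≤ hV.1.eigenvalues i := fun i => by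
      have hβ_le := hV.det_le_eigenvalues_mul_trace_pow i
      rw [hdet, htrV, Fintype.card_fin] at hβ_le
      have hexp : 1 - (n : ℤ) = -((n - 1 : ℕ) : ℤ) := by have := i.pos; omega
      rwa [hexp, _root_.zpow_neg, zpow_natCast, ← div_eq_mul_inv, div_le_iff₀ (by positivity)]
    simpa [dotProduct_comm] using hV.1.mul_re_dotProduct_self_le_of_le_eigenvalues hc x

/-- The final estimate in the proof of Theorem 1.2: if `A` is symmetric negative
semidefinite with `trace A = −α`, `B` is symmetric with `trace B = α`, `V = B − A` is
positive semidefinite with `det V = β ≠ 0`, then `β > 0`, `‖A‖ ≤ α`, and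
`⟪V·x, x⟫ ≥ β·(2α)^(1−n)·‖x‖²` for all `x`. -/
theorem bolton_criterion_estimates (n : ℕ) (hn : 1 ≤ n) (α β : ℝ)
    (hα : 0 < α) (hβ : β ≠ 0)
    (A B : Matrix (Fin n) (Fin n) ℝ)
    (hAsymm : A.IsSymm) (hBsymm : B.IsSymm)
    (hAneg : ∀ x : Fin n → ℝ, (A *ᵥ x) ⬝ᵥ x ≤ 0)
    (hVpos : ∀ x : Fin n → ℝ, 0 ≤ ((B - A) *ᵥ x) ⬝ᵥ x)
    (htrA : A.trace = -α) (htrB : B.trace = α)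
    (hdet : (B - A).det = β) :
    0 < β ∧ ‖Matrix.toEuclideanCLM (𝕜 := ℝ) A‖ ≤ α ∧
      ∀ x : Fin n → ℝ, β * (2 * α) ^ (1 - (n : ℤ)) * (x ⬝ᵥ x) ≤ ((B - A) *ᵥ x) ⬝ᵥ x :=
  bolton_criterion_estimates_general n α β hα hβ A B hAsymm hBsymm hAneg hVpos htrA htrB hdet
end
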